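/- Let (ξ_n)_{n∈ℤ} be a stationary Markov chain and f ∈ L²_0(π). Let a < b ≤ c < d be nonnegative integers and set U = ∑_{i=a+1}^{b} X_i and W = ∑_{i=c+1}^{d} X_i. Then |E(U·W)| ≤ ‖E(S_{b−a}|ξ_{b−a})‖ · ‖E(S_{d−c}|ξ_0)‖. -/

import Mathlib

open MeasureTheory ProbabilityTheory Filter
open scoped ENNReal NNReal Topology

noncomputable section

/-- The σ-algebra generated by the random variables `ξ k`, `k ∈ I`. -/
def sigmaOf {Ω S : Type*} [MeasurableSpace S] (ξ : ℤ → Ω → S) (I : Set ℤ) :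
    MeasurableSpace Ω :=
  ⨆ k ∈ I, MeasurableSpace.comap (ξ k) inferInstance

/-- The σ-algebra generated by the pair `(ξ i, ξ j)`. -/
def pairSigma {Ω S : Type*} [MeasurableSpace S] (ξ : ℤ → Ω → S) (i j : ℤ) :
    MeasurableSpace Ω :=
  MeasurableSpace.comap (ξ i) inferInstance ⊔ MeasurableSpace.comap (ξ j) inferInstance

/-- Conditional independence of the σ-algebras `m₁` and `m₂` given `m'`. -/
def CondIndepGiven {Ω : Type*} [MeasurableSpace Ω] (μ : Measure Ω)
    (m' m₁ m₂ : MeasurableSpace Ω) : Prop :=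
  ∀ A B : Set Ω, MeasurableSet[m₁] A → MeasurableSet[m₂] B →
    μ[(A ∩ B).indicator (fun _ => (1 : ℝ)) | m'] =ᵐ[μ]
      fun ω => (μ[A.indicator (fun _ => (1 : ℝ)) | m']) ω *
        (μ[B.indicator (fun _ => (1 : ℝ)) | m']) ω

/-- Markov property: for every `n`, the past `σ(ξ k, k ≤ n)` and the future
`σ(ξ k, k ≥ n)` are conditionally independent given `σ(ξ n)`. -/
def IsMarkovChain {Ω S : Type*} [MeasurableSpace Ω] [MeasurableSpace S]
    (μ : Measure Ω) (ξ : ℤ → Ω → S) : Prop :=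
  ∀ n : ℤ, CondIndepGiven μ (MeasurableSpace.comap (ξ n) inferInstance)
    (sigmaOf ξ {k | k ≤ n}) (sigmaOf ξ {k | n ≤ k})

/-- Stationarity: `(ξ (n+1))_n` has the same law as `(ξ n)_n`. -/
def IsStationaryZ {Ω S : Type*} [MeasurableSpace Ω] [MeasurableSpace S]
    (μ : Measure Ω) (ξ : ℤ → Ω → S) : Prop :=
  Measure.map (fun ω (n : ℤ) => ξ (n + 1) ω) μ = Measure.map (fun ω (n : ℤ) => ξ n ω) μ

/-- The left shift on path space `S^ℤ`. -/
def shiftZ {S : Type*} (x : ℤ → S) : ℤ → S := fun n => x (n + 1)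

/-- Total ergodicity: every iterate of the shift is ergodic for the law of the chain. -/
def TotallyErgodic {Ω S : Type*} [MeasurableSpace Ω] [MeasurableSpace S]
    (μ : Measure Ω) (ξ : ℤ → Ω → S) : Prop :=
  ∀ k : ℕ, 0 < k → Ergodic (shiftZ^[k]) (Measure.map (fun ω (n : ℤ) => ξ n ω) μ)

/-- Partial sums `S_n = f(ξ 1) + ⋯ + f(ξ n)`. -/
def pS {Ω S : Type*} (ξ : ℤ → Ω → S) (f : S → ℝ) (n : ℕ) (ω : Ω) : ℝ :=
  ∑ i ∈ Finset.Icc 1 n, f (ξ (i : ℤ) ω)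

/-- Convergence in distribution (weak convergence of the laws) of real random
variables to the measure `ν`. -/
def TendstoInDistribution {Ω : Type*} [MeasurableSpace Ω] (μ : Measure Ω)
    (Y : ℕ → Ω → ℝ) (ν : Measure ℝ) : Prop :=
  ∀ g : BoundedContinuousFunction ℝ ℝ,
    Tendsto (fun n => ∫ ω, g (Y n ω) ∂μ) atTop (𝓝 (∫ x, g x ∂ν))

/-!
Condition `W` on the past of time `c` and `U` on the future of time `b`: by the Markov property these
conditional expectations are `E(W | ξ_c)` and `E(U | ξ_b)`, so `E(UW) = E(E(U | ξ_b) E(W | ξ_c))`,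
which Cauchy–Schwarz bounds by the product of the two `L²` norms. The `L²` norm of `E(h(ξ) | ψ(ξ))`
depends only on the law of the path `ξ`, so stationarity lets us shift the chain by `a` (resp. `c`)
and obtain the norms of `E(S_{b-a} | ξ_{b-a})` and `E(S_{d-c} | ξ_0)`.
-/

theorem mul_indicator_one_eq_indicator {α : Type*} (F : α → ℝ) (s : Set α) :
    (fun x => F x * s.indicator (fun _ => (1 : ℝ)) x) = s.indicator F := by
  funext x
  by_cases hx : x ∈ s <;> simp [hx]

section CondExp

variable {α : Type*} {m : MeasurableSpace α} [mα : MeasurableSpace α] {μ : Measure α}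

theorem integral_mul_condExp [IsFiniteMeasure μ] (hm : m ≤ mα) {g X : α → ℝ}
    (hg : StronglyMeasurable[m] g) (hgX : Integrable (fun x => g x * X x) μ)
    (hX : Integrable X μ) :
    ∫ x, g x * X x ∂μ = ∫ x, g x * (μ[X | m]) x ∂μ :=
  calc ∫ x, g x * X x ∂μ = ∫ x, (μ[g * X | m]) x ∂μ := (integral_condExp hm).symm
    _ = ∫ x, g x * (μ[X | m]) x ∂μ :=
      integral_congr_ae (condExp_mul_of_stronglyMeasurable_left hg hgX hX)

theorem abs_integral_mul_le_eLpNorm_mul_eLpNorm {U W : α → ℝ} (hU : MemLp U 2 μ)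
    (hW : MemLp W 2 μ) :
    |∫ x, U x * W x ∂μ| ≤ (eLpNorm U 2 μ).toReal * (eLpNorm W 2 μ).toReal := by
  have hinner : ∫ x, U x * W x ∂μ = inner ℝ (hU.toLp U) (hW.toLp W) := by
    rw [L2.inner_def]
    refine integral_congr_ae ?_
    filter_upwards [hU.coeFn_toLp, hW.coeFn_toLp] with x hUx hWx
    simp [hUx, hWx, mul_comm]
  rw [hinner, ← Lp.norm_toLp U hU, ← Lp.norm_toLp W hW]
  exact abs_real_inner_le_norm _ _

end CondExp

section CondIndepGiven

variable {α : Type*} {m' m₁ m₂ : MeasurableSpace α} [mα : MeasurableSpace α] {μ : Measure α}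

theorem CondIndepGiven.symm (h : CondIndepGiven μ m' m₁ m₂) : CondIndepGiven μ m' m₂ m₁ := by
  intro A B hA hB
  rw [Set.inter_comm]
  exact (h B A hB hA).trans (Eventually.of_forall fun _ => mul_comm _ _)

variable [IsFiniteMeasure μ]

theorem CondIndepGiven.condExp_indicator_eq (h : CondIndepGiven μ m' m₁ m₂) (hm' : m' ≤ m₂)
    (hm₂ : m₂ ≤ mα) {A : Set α} (hA : MeasurableSet[m₁] A) (hA' : MeasurableSet A) :
    μ[A.indicator (fun _ => (1 : ℝ)) | m₂] =ᵐ[μ] μ[A.indicator (fun _ => (1 : ℝ)) | m'] := by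
  have hint : ∀ {s : Set α}, MeasurableSet s → Integrable (s.indicator fun _ => (1 : ℝ)) μ :=
    fun hs => (integrable_const 1).indicator hs
  refine (ae_eq_condExp_of_forall_setIntegral_eq hm₂ (hint hA')
    (fun _ _ _ => integrable_condExp.integrableOn) (fun B hB _ => ?_)
    (stronglyMeasurable_condExp.mono hm').aestronglyMeasurable).symm
  have hB' : MeasurableSet B := hm₂ B hB
  calc ∫ x in B, (μ[A.indicator (fun _ => (1 : ℝ)) | m']) x ∂μ
      = ∫ x, (μ[A.indicator (fun _ => (1 : ℝ)) | m']) x * B.indicator (fun _ => (1 : ℝ)) x ∂μ := by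
        rw [mul_indicator_one_eq_indicator, integral_indicator hB']
    _ = ∫ x, (μ[A.indicator (fun _ => (1 : ℝ)) | m']) x *
          (μ[B.indicator (fun _ => (1 : ℝ)) | m']) x ∂μ := by
        refine integral_mul_condExp (hm'.trans hm₂) stronglyMeasurable_condExp ?_ (hint hB')
        rw [mul_indicator_one_eq_indicator]
        exact integrable_condExp.indicator hB'
    _ = ∫ x, (μ[(A ∩ B).indicator (fun _ => (1 : ℝ)) | m']) x ∂μ :=
        integral_congr_ae (h A B hA hB).symm
    _ = ∫ x in B, A.indicator (fun _ => (1 : ℝ)) x ∂μ := by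
        rw [integral_condExp (hm'.trans hm₂), integral_indicator (hA'.inter hB'),
          setIntegral_indicator hA', Set.inter_comm]

theorem CondIndepGiven.condExp_eq (h : CondIndepGiven μ m' m₁ m₂) (hm'₁ : m' ≤ m₁)
    (hm'₂ : m' ≤ m₂) (hm₁ : m₁ ≤ mα) (hm₂ : m₂ ≤ mα) {Y : α → ℝ}
    (hY : StronglyMeasurable[m₂] Y) (hYi : Integrable Y μ) :
    μ[Y | m₁] =ᵐ[μ] μ[Y | m'] := by
  refine (ae_eq_condExp_of_forall_setIntegral_eq hm₁ hYi
    (fun _ _ _ => integrable_condExp.integrableOn) (fun A hA _ => ?_)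
    (stronglyMeasurable_condExp.mono hm'₁).aestronglyMeasurable).symm
  have hA' : MeasurableSet A := hm₁ A hA
  set χ : α → ℝ := A.indicator fun _ => 1
  have hχ : Integrable χ μ := (integrable_const 1).indicator hA'
  have hχ_bdd : ∀ᵐ x ∂μ, ‖(μ[χ | m']) x‖ ≤ 1 :=
    ae_bdd_abs_condExp_of_ae_bdd_abs (R := 1) (Eventually.of_forall fun x => by
      by_cases hx : x ∈ A <;> simp [χ, hx])
  -- Against the `m₂`-measurable `Y`, `χ` may be replaced by `E(χ | m₂)`, which is `E(χ | m')`.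
  calc ∫ x in A, (μ[Y | m']) x ∂μ
      = ∫ x, (μ[Y | m']) x * χ x ∂μ := by
        rw [mul_indicator_one_eq_indicator, integral_indicator hA']
    _ = ∫ x, (μ[Y | m']) x * (μ[χ | m']) x ∂μ := by
        refine integral_mul_condExp (hm'₁.trans hm₁) stronglyMeasurable_condExp ?_ hχ
        rw [mul_indicator_one_eq_indicator]
        exact integrable_condExp.indicator hA'
    _ = ∫ x, (μ[χ | m']) x * (μ[Y | m']) x ∂μ := by simp_rw [mul_comm]
    _ = ∫ x, (μ[χ | m']) x * Y x ∂μ :=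
        (integral_mul_condExp (hm'₁.trans hm₁) stronglyMeasurable_condExp
          (hYi.bdd_mul integrable_condExp.aestronglyMeasurable hχ_bdd) hYi).symm
    _ = ∫ x, Y x * (μ[χ | m₂]) x ∂μ := by
        refine integral_congr_ae ?_
        filter_upwards [h.condExp_indicator_eq hm'₂ hm₂ hA hA'] with x hx
        rw [hx, mul_comm]
    _ = ∫ x, Y x * χ x ∂μ := by
        refine (integral_mul_condExp hm₂ hY ?_ hχ).symm
        rw [mul_indicator_one_eq_indicator]
        exact hYi.indicator hA'
    _ = ∫ x in A, Y x ∂μ := by rw [mul_indicator_one_eq_indicator, integral_indicator hA']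

end CondIndepGiven

section MarkovChain

variable {Ω S : Type*} [MeasurableSpace S] {ξ : ℤ → Ω → S}

theorem comap_le_sigmaOf {I : Set ℤ} {k : ℤ} (hk : k ∈ I) :
    MeasurableSpace.comap (ξ k) inferInstance ≤ sigmaOf ξ I :=
  le_iSup₂ (f := fun k (_ : k ∈ I) => MeasurableSpace.comap (ξ k) inferInstance) k hk

theorem sigmaOf_mono {I J : Set ℤ} (hIJ : I ⊆ J) : sigmaOf ξ I ≤ sigmaOf ξ J :=
  iSup₂_le fun _ hk => comap_le_sigmaOf (hIJ hk)

theorem stronglyMeasurable_sum_sigmaOf {f : S → ℝ} (hf : Measurable f) {I : Set ℤ}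
    {s : Finset ℕ} (hs : ∀ i ∈ s, (i : ℤ) ∈ I) :
    StronglyMeasurable[sigmaOf ξ I] (fun ω => ∑ i ∈ s, f (ξ i ω)) :=
  (Finset.measurable_sum _ fun (i : ℕ) hi =>
    (hf.comp (comap_measurable (ξ i))).mono (comap_le_sigmaOf (hs i hi)) le_rfl).stronglyMeasurable

variable [mΩ : MeasurableSpace Ω] {μ : Measure Ω}

theorem sigmaOf_le (hmeas : ∀ n, Measurable (ξ n)) (I : Set ℤ) : sigmaOf ξ I ≤ mΩ :=
  iSup₂_le fun k _ => (hmeas k).comap_le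

variable [IsFiniteMeasure μ]

theorem IsMarkovChain.condExp_past_eq (hmarkov : IsMarkovChain μ ξ)
    (hmeas : ∀ n, Measurable (ξ n)) (n : ℤ) {Y : Ω → ℝ}
    (hY : StronglyMeasurable[sigmaOf ξ {k | n ≤ k}] Y) (hYi : Integrable Y μ) :
    μ[Y | sigmaOf ξ {k | k ≤ n}] =ᵐ[μ] μ[Y | MeasurableSpace.comap (ξ n) inferInstance] :=
  (hmarkov n).condExp_eq (comap_le_sigmaOf (le_refl n)) (comap_le_sigmaOf (le_refl n))
    (sigmaOf_le hmeas _) (sigmaOf_le hmeas _) hY hYi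

theorem IsMarkovChain.condExp_future_eq (hmarkov : IsMarkovChain μ ξ)
    (hmeas : ∀ n, Measurable (ξ n)) (n : ℤ) {Y : Ω → ℝ}
    (hY : StronglyMeasurable[sigmaOf ξ {k | k ≤ n}] Y) (hYi : Integrable Y μ) :
    μ[Y | sigmaOf ξ {k | n ≤ k}] =ᵐ[μ] μ[Y | MeasurableSpace.comap (ξ n) inferInstance] :=
  (hmarkov n).symm.condExp_eq (comap_le_sigmaOf (le_refl n)) (comap_le_sigmaOf (le_refl n))
    (sigmaOf_le hmeas _) (sigmaOf_le hmeas _) hY hYi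

theorem IsMarkovChain.integral_mul_eq (hmarkov : IsMarkovChain μ ξ)
    (hmeas : ∀ n, Measurable (ξ n)) {b c : ℤ} (hbc : b ≤ c) {U W : Ω → ℝ}
    (hU : StronglyMeasurable[sigmaOf ξ {k | k ≤ b}] U)
    (hW : StronglyMeasurable[sigmaOf ξ {k | c ≤ k}] W) (hU2 : MemLp U 2 μ) (hW2 : MemLp W 2 μ) :
    ∫ ω, U ω * W ω ∂μ =
      ∫ ω, (μ[U | MeasurableSpace.comap (ξ b) inferInstance]) ω *
        (μ[W | MeasurableSpace.comap (ξ c) inferInstance]) ω ∂μ := by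
  set Wc := μ[W | MeasurableSpace.comap (ξ c) inferInstance]
  have hUc : StronglyMeasurable[sigmaOf ξ {k | k ≤ c}] U :=
    hU.mono (sigmaOf_mono fun _ (hk : _ ≤ b) => hk.trans hbc)
  have hWc : StronglyMeasurable[sigmaOf ξ {k | b ≤ k}] Wc :=
    stronglyMeasurable_condExp.mono (comap_le_sigmaOf hbc)
  calc ∫ ω, U ω * W ω ∂μ
      = ∫ ω, U ω * (μ[W | sigmaOf ξ {k | k ≤ c}]) ω ∂μ :=
        integral_mul_condExp (sigmaOf_le hmeas _) hUc (hU2.integrable_mul hW2)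
          (hW2.integrable one_le_two)
    _ = ∫ ω, U ω * Wc ω ∂μ := by
        refine integral_congr_ae ?_
        filter_upwards [hmarkov.condExp_past_eq hmeas c hW (hW2.integrable one_le_two)]
          with ω hω
        rw [hω]
    _ = ∫ ω, Wc ω * U ω ∂μ := by simp_rw [mul_comm]
    _ = ∫ ω, Wc ω * (μ[U | sigmaOf ξ {k | b ≤ k}]) ω ∂μ :=
        integral_mul_condExp (sigmaOf_le hmeas _) hWc
          ((hW2.condExp one_le_two).integrable_mul hU2) (hU2.integrable one_le_two)
    _ = _ := by
        refine integral_congr_ae ?_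
        filter_upwards [hmarkov.condExp_future_eq hmeas b hU (hU2.integrable one_le_two)]
          with ω hω
        rw [hω, mul_comm]

end MarkovChain

section Pushforward

variable {α β γ : Type*} [MeasurableSpace α] [MeasurableSpace β] [mγ : MeasurableSpace γ]
  {μ : Measure α} [IsFiniteMeasure μ]

theorem condExp_comp_ae_eq {τ : α → β} (hτ : Measurable τ) {ψ : β → γ} (hψ : Measurable ψ)
    {h : β → ℝ} (hh : Integrable h (μ.map τ)) :
    μ[h ∘ τ | mγ.comap (ψ ∘ τ)] =ᵐ[μ] (μ.map τ)[h | mγ.comap ψ] ∘ τ := by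
  have hψτ : mγ.comap (ψ ∘ τ) = (mγ.comap ψ).comap τ := MeasurableSpace.comap_comp.symm
  have hg : StronglyMeasurable[mγ.comap ψ] ((μ.map τ)[h | mγ.comap ψ]) :=
    stronglyMeasurable_condExp
  refine (ae_eq_condExp_of_forall_setIntegral_eq (hψ.comp hτ).comap_le
    ((integrable_map_measure hh.1 hτ.aemeasurable).mp hh)
    (fun _ _ _ => ((integrable_map_measure (hg.mono hψ.comap_le).aestronglyMeasurable
      hτ.aemeasurable).mp integrable_condExp).integrableOn) (fun s hs _ => ?_) ?_).symm
  · rw [hψτ] at hs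
    obtain ⟨t, ht, rfl⟩ := hs
    change ∫ x in τ ⁻¹' t, (μ.map τ)[h | mγ.comap ψ] (τ x) ∂μ = ∫ x in τ ⁻¹' t, h (τ x) ∂μ
    rw [← setIntegral_map (hψ.comap_le t ht) (hg.mono hψ.comap_le).aestronglyMeasurable
        hτ.aemeasurable, ← setIntegral_map (hψ.comap_le t ht) hh.1 hτ.aemeasurable]
    exact setIntegral_condExp hψ.comap_le hh ht
  · rw [hψτ]
    exact (hg.comp_measurable (Measurable.of_comap_le le_rfl)).aestronglyMeasurable

theorem eLpNorm_condExp_comp {τ : α → β} (hτ : Measurable τ) {ψ : β → γ} (hψ : Measurable ψ)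
    {h : β → ℝ} (hh : Integrable h (μ.map τ)) (p : ℝ≥0∞) :
    eLpNorm (μ[h ∘ τ | mγ.comap (ψ ∘ τ)]) p μ =
      eLpNorm ((μ.map τ)[h | mγ.comap ψ]) p (μ.map τ) := by
  rw [eLpNorm_congr_ae (condExp_comp_ae_eq hτ hψ hh)]
  exact (eLpNorm_map_measure (stronglyMeasurable_condExp.mono hψ.comap_le).aestronglyMeasurable
    hτ.aemeasurable).symm

theorem eLpNorm_condExp_comp_eq_of_map_eq {τ τ' : α → β} (hτ : Measurable τ)
    (hτ' : Measurable τ') (hmap : μ.map τ = μ.map τ') {ψ : β → γ} (hψ : Measurable ψ)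
    {h : β → ℝ} (hh : Integrable h (μ.map τ)) (p : ℝ≥0∞) :
    eLpNorm (μ[h ∘ τ | mγ.comap (ψ ∘ τ)]) p μ = eLpNorm (μ[h ∘ τ' | mγ.comap (ψ ∘ τ')]) p μ := by
  rw [eLpNorm_condExp_comp hτ hψ hh, eLpNorm_condExp_comp hτ' hψ (hmap ▸ hh), hmap]

end Pushforward

section StationaryChain

variable {Ω S : Type*} [MeasurableSpace Ω] [MeasurableSpace S] {μ : Measure Ω} {ξ : ℤ → Ω → S}

theorem IsStationaryZ.map_shift_eq (hstat : IsStationaryZ μ ξ) (hmeas : ∀ n, Measurable (ξ n))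
    (k : ℕ) : μ.map (fun ω (n : ℤ) => ξ (n + k) ω) = μ.map (fun ω (n : ℤ) => ξ n ω) := by
  induction k with
  | zero => simp
  | succ k ih =>
    have hshift : Measurable fun (x : ℤ → S) (n : ℤ) => x (n + k) :=
      measurable_pi_lambda _ fun n => measurable_pi_apply _
    calc μ.map (fun ω (n : ℤ) => ξ (n + ↑(k + 1)) ω)
        = (μ.map fun ω (n : ℤ) => ξ (n + 1) ω).map fun x n => x (n + k) := by
          rw [Measure.map_map hshift (measurable_pi_lambda _ fun n => hmeas _)]
          congr 1
          funext ω n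
          congr 1
          push_cast
          ring
      _ = (μ.map fun ω (n : ℤ) => ξ n ω).map fun x n => x (n + k) := by
          rw [show μ.map (fun ω (n : ℤ) => ξ (n + 1) ω) = _ from hstat]
      _ = μ.map (fun ω (n : ℤ) => ξ n ω) := by
          rw [Measure.map_map hshift (measurable_pi_lambda _ hmeas)]
          exact ih

theorem IsStationaryZ.map_eq (hstat : IsStationaryZ μ ξ) (hmeas : ∀ n, Measurable (ξ n))
    (k : ℕ) : μ.map (ξ k) = μ.map (ξ 0) := by
  have h := congrArg (fun ν : Measure (ℤ → S) => ν.map fun x => x 0) (hstat.map_shift_eq hmeas k)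
  rw [Measure.map_map (measurable_pi_apply 0) (measurable_pi_lambda _ fun n => hmeas _),
    Measure.map_map (measurable_pi_apply 0) (measurable_pi_lambda _ hmeas)] at h
  simpa [Function.comp_def] using h

theorem IsStationaryZ.memLp_comp (hstat : IsStationaryZ μ ξ) (hmeas : ∀ n, Measurable (ξ n))
    {f : S → ℝ} (hf : Measurable f) {p : ℝ≥0∞} (hp : MemLp (fun ω => f (ξ 0 ω)) p μ) (k : ℕ) :
    MemLp (fun ω => f (ξ k ω)) p μ := by
  have h0 : MemLp f p (μ.map (ξ 0)) :=
    (memLp_map_measure_iff hf.aestronglyMeasurable (hmeas 0).aemeasurable).2 hp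
  exact (memLp_map_measure_iff hf.aestronglyMeasurable (hmeas k).aemeasurable).1
    (hstat.map_eq hmeas k ▸ h0)

theorem IsStationaryZ.eLpNorm_condExp_sum_Icc [IsFiniteMeasure μ] (hstat : IsStationaryZ μ ξ)
    (hmeas : ∀ n, Measurable (ξ n)) {f : S → ℝ} (hf : Measurable f)
    (hint : Integrable (fun ω => f (ξ 0 ω)) μ) {a b : ℕ} (hab : a ≤ b) (n : ℤ) (p : ℝ≥0∞) :
    eLpNorm (μ[fun ω => ∑ i ∈ Finset.Icc (a + 1) b, f (ξ i ω) |
        MeasurableSpace.comap (ξ n) inferInstance]) p μ =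
      eLpNorm (μ[pS ξ f (b - a) | MeasurableSpace.comap (ξ (n - a)) inferInstance]) p μ := by
  set τ : Ω → ℤ → S := fun ω k => ξ k ω
  set τ' : Ω → ℤ → S := fun ω k => ξ (k + a) ω
  set h : (ℤ → S) → ℝ := fun x => ∑ i ∈ Finset.Icc 1 (b - a), f (x i)
  have hτ : Measurable τ := measurable_pi_lambda _ hmeas
  have hτ' : Measurable τ' := measurable_pi_lambda _ fun _ => hmeas _
  have hsum : (fun ω => ∑ i ∈ Finset.Icc (a + 1) b, f (ξ i ω)) = h ∘ τ' := by
    funext ω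
    rw [← Nat.sub_add_cancel hab, add_comm a 1, ← Finset.map_add_right_Icc, Finset.sum_map]
    simp [h, τ']
  have hh : Integrable h (μ.map τ) := by
    refine (integrable_map_measure (Finset.measurable_sum _ fun i _ =>
      hf.comp (measurable_pi_apply _)).aestronglyMeasurable hτ.aemeasurable).2 ?_
    exact integrable_finsetSum _ fun i _ =>
      (hstat.memLp_comp hmeas hf (memLp_one_iff_integrable.2 hint) i).integrable le_rfl
  rw [hsum, show ξ n = (fun x : ℤ → S => x (n - a)) ∘ τ' by funext ω; simp [τ'],
    ← eLpNorm_condExp_comp_eq_of_map_eq hτ hτ' (hstat.map_shift_eq hmeas a).symm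
      (measurable_pi_apply _) hh]
  rfl

end StationaryChain

theorem stmt16_general {Ω S : Type*} [MeasurableSpace Ω] [MeasurableSpace S]
    (μ : Measure Ω) [IsProbabilityMeasure μ] (ξ : ℤ → Ω → S)
    (hmeas : ∀ n, Measurable (ξ n))
    (hstat : IsStationaryZ μ ξ) (hmarkov : IsMarkovChain μ ξ)
    (f : S → ℝ) (hf : Measurable f)
    (hL2 : MemLp (fun ω => f (ξ 0 ω)) 2 μ)
    (a b c d : ℕ) (hab : a < b) (hbc : b ≤ c) (hcd : c < d) :
    |∫ ω, (∑ i ∈ Finset.Icc (a + 1) b, f (ξ (i : ℤ) ω)) *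
        (∑ i ∈ Finset.Icc (c + 1) d, f (ξ (i : ℤ) ω)) ∂μ| ≤
      (eLpNorm (μ[pS ξ f (b - a) |
          MeasurableSpace.comap (ξ ((b : ℤ) - (a : ℤ))) inferInstance]) 2 μ).toReal *
        (eLpNorm (μ[pS ξ f (d - c) |
          MeasurableSpace.comap (ξ 0) inferInstance]) 2 μ).toReal := by
  have hX : ∀ i : ℕ, MemLp (fun ω => f (ξ i ω)) 2 μ := hstat.memLp_comp hmeas hf hL2
  have hU := memLp_finsetSum (Finset.Icc (a + 1) b) fun i _ => hX i
  have hW := memLp_finsetSum (Finset.Icc (c + 1) d) fun i _ => hX i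
  rw [hmarkov.integral_mul_eq hmeas (Int.ofNat_le.2 hbc)
    (stronglyMeasurable_sum_sigmaOf hf fun i hi => Int.ofNat_le.2 (Finset.mem_Icc.1 hi).2)
    (stronglyMeasurable_sum_sigmaOf hf fun i hi =>
      show (c : ℤ) ≤ i by have := (Finset.mem_Icc.1 hi).1; omega) hU hW]
  refine (abs_integral_mul_le_eLpNorm_mul_eLpNorm (hU.condExp one_le_two)
    (hW.condExp one_le_two)).trans_eq ?_
  rw [hstat.eLpNorm_condExp_sum_Icc hmeas hf (hL2.integrable one_le_two) hab.le,
    hstat.eLpNorm_condExp_sum_Icc hmeas hf (hL2.integrable one_le_two) hcd.le, sub_self]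

theorem stmt16 {Ω S : Type*} [MeasurableSpace Ω] [MeasurableSpace S]
    (μ : Measure Ω) [IsProbabilityMeasure μ] (ξ : ℤ → Ω → S)
    (hmeas : ∀ n, Measurable (ξ n))
    (hstat : IsStationaryZ μ ξ) (hmarkov : IsMarkovChain μ ξ)
    (f : S → ℝ) (hf : Measurable f)
    (hmean : ∫ ω, f (ξ 0 ω) ∂μ = 0)
    (hL2 : MemLp (fun ω => f (ξ 0 ω)) 2 μ)
    (a b c d : ℕ) (hab : a < b) (hbc : b ≤ c) (hcd : c < d) :
    |∫ ω, (∑ i ∈ Finset.Icc (a + 1) b, f (ξ (i : ℤ) ω)) *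
        (∑ i ∈ Finset.Icc (c + 1) d, f (ξ (i : ℤ) ω)) ∂μ| ≤
      (eLpNorm (μ[pS ξ f (b - a) |
          MeasurableSpace.comap (ξ ((b : ℤ) - (a : ℤ))) inferInstance]) 2 μ).toReal *
        (eLpNorm (μ[pS ξ f (d - c) |
          MeasurableSpace.comap (ξ 0) inferInstance]) 2 μ).toReal :=
  stmt16_general μ ξ hmeas hstat hmarkov f hf hL2 a b c d hab hbc hcd
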